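/- Let F be a zig-zag network of order n, let u, v ∈ S_n, and suppose π = (π_1,…,π_n) is a path family covering F such that for each m the path π_{u_m} (starting at source u_m) ends at sink v_m. Let U(u,π) be the one-rowed tableau listing π_{u_1},…,π_{u_n} from left to right. Suppose u_i > u_{i+1}, and let u′ (resp. v′) be obtained from u (resp. v) by interchanging the entries in positions i and i+1 of the one-line notation. Then: (1) if v_i < v_{i+1}, then rinv(U(u,π)) = rinv(U(u′,π)) − 1; (2) if v_i > v_{i+1} and no path family ρ covering F has its path from source u_m ending at sink v′_m for every m, then rinv(U(u,π)) = rinv(U(u′,π)); (3) if v_i > v_{i+1} and some such path family covering F exists, then rinv(U(u,π)) = rinv(U(u′,π)) + 1. -/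

import Mathlib

/-!
The adjacent transposition of positions `i, i+1` maps every right inversion of `U(u, π)` other
than the pair `(i, i+1)` bijectively onto one of `U(u', π)`, so only the status of that pair
matters, and it is decided by the geometry of the network.

Following a path star by star, the wire it occupies moves only inside a star the path passes
through; hence two vertex-disjoint paths keep the relative order of their wires, and paths whose
sources and sinks are in opposite order must meet. Two paths that meet can exchange their tails
at a common vertex, which keeps the family covering: so if `π_{u_i}` and `π_{u_{i+1}}` meet, a
covering family of type `v'` exists. Conversely such a family has crossing paths from `u_i` and
`u_{i+1}`; exchanging their tails gives paths from `u_i` to `v_i` and from `u_{i+1}` to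
`v_{i+1}` through a common vertex, and these are `π_{u_i}` and `π_{u_{i+1}}`, because a zig-zag
network has at most one path from a vertex to a sink.
-/

namespace ZigZag

noncomputable section

attribute [local instance] Classical.propDecidable

/-- Vertices of a network of order `n` built from `t` stars:
sources, sinks and central vertices. -/
inductive V (n t : ℕ) : Type
  | src : Fin n → V n t
  | snk : Fin n → V n t
  | ctr : Fin t → V n t
  deriving DecidableEq

/-- Data of a concatenation `G_{[c 0, d 0]} ∘ ⋯ ∘ G_{[c (t-1), d (t-1)]}` of star
networks of order `n`: pairwise distinct, pairwise non-nesting intervals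
satisfying the triple-overlap condition. -/
structure IntervalData (n t : ℕ) : Type where
  c : Fin t → Fin n
  d : Fin t → Fin n
  cd_le : ∀ k, c k ≤ d k
  nonnest : ∀ k l : Fin t, k ≠ l → ¬ (c k ≤ c l ∧ d l ≤ d k)
  tripleOverlap : ∀ k l m : Fin t, k < l → l < m →
    (c k ≤ d l ∧ c l ≤ d k) → (c l ≤ d m ∧ c m ≤ d l) →
    (c k < c l ∧ c l < c m) ∨ (c m < c l ∧ c l < c k)

variable {n t : ℕ}

/-- `i` belongs to the `k`-th interval `[c k, d k]`. -/
def IntervalData.mem (D : IntervalData n t) (k : Fin t) (i : Fin n) : Prop :=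
  D.c k ≤ i ∧ i ≤ D.d k

/-- Edges of the zig-zag network associated to `D` (collapsing the parallel
central edges, i.e. keeping one path per covering pair). -/
inductive Edge (D : IntervalData n t) : V n t → V n t → Prop
  | srcCtr (i : Fin n) (k : Fin t) : D.mem k i → (∀ l, l < k → ¬ D.mem l i) →
      Edge D (V.src i) (V.ctr k)
  | ctrSnk (i : Fin n) (k : Fin t) : D.mem k i → (∀ l, k < l → ¬ D.mem l i) →
      Edge D (V.ctr k) (V.snk i)
  | srcSnk (i : Fin n) : (∀ k, ¬ D.mem k i) → Edge D (V.src i) (V.snk i)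
  | ctrCtr (i : Fin n) (k l : Fin t) : k < l → D.mem k i → D.mem l i →
      (∀ m, k < m → m < l → ¬ D.mem m i) → Edge D (V.ctr k) (V.ctr l)

/-- A directed path (a nonempty list of successively adjacent vertices)
from `x` to `y` in the digraph with edge relation `E`. -/
def PathIn (E : V n t → V n t → Prop) (p : List (V n t)) (x y : V n t) : Prop :=
  p ≠ [] ∧ p.Chain' E ∧ p.head? = some x ∧ p.getLast? = some y

/-- A directed path from source `i` to sink `j` in the zig-zag network of `D`. -/
def IsPathFromTo (D : IntervalData n t) (p : List (V n t)) (i j : Fin n) : Prop :=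
  PathIn (Edge D) p (V.src i) (V.snk j)

/-- The intervals `[c k, d k]` and `[c l, d l]` intersect. -/
def Intersects (D : IntervalData n t) (k l : Fin t) : Prop :=
  D.c k ≤ D.d l ∧ D.c l ≤ D.d k

/-- The covering relation `⋖` on the intervals of the concatenation. -/
def Cov (D : IntervalData n t) (k l : Fin t) : Prop :=
  k < l ∧ Intersects D k l ∧
    ∀ m, k < m → m < l → ∀ i : Fin n, ¬ (D.mem k i ∧ D.mem l i ∧ D.mem m i)

/-- The strict partial order `≺` generated by the covering relation. -/
def Prec (D : IntervalData n t) : Fin t → Fin t → Prop :=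
  Relation.TransGen (Cov D)

/-- A path family of type `v`: the `i`-th path runs from source `i` to sink `v i`. -/
def IsFamilyOfType (D : IntervalData n t) (fam : Fin n → List (V n t))
    (v : Equiv.Perm (Fin n)) : Prop :=
  ∀ i, IsPathFromTo D (fam i) i (v i)

/-- The path family covers the network: every edge lies on some path. -/
def Covers (D : IntervalData n t) (fam : Fin n → List (V n t)) : Prop :=
  ∀ x y, Edge D x y → ∃ i, [x, y] <:+: fam i

/-- Bruhat order on `S_n`. -/
def BruhatLE (v w : Equiv.Perm (Fin n)) : Prop :=
  ∀ i j : Fin n,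
    (Finset.univ.filter fun k : Fin n => k ≤ i ∧ j ≤ v k).card ≤
      (Finset.univ.filter fun k : Fin n => k ≤ i ∧ j ≤ w k).card

/-- `D` is interval data for the zig-zag network `F_w`: a path family of type `v`
covers it iff `v ≤ w` in Bruhat order, and such families are unique. -/
def Represents (D : IntervalData n t) (w : Equiv.Perm (Fin n)) : Prop :=
  ∀ v : Equiv.Perm (Fin n),
    ((∃ fam, IsFamilyOfType D fam v ∧ Covers D fam) ↔ BruhatLE v w) ∧
    ∀ fam fam', IsFamilyOfType D fam v → Covers D fam →
      IsFamilyOfType D fam' v → Covers D fam' → fam = fam'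

def Avoids3412 (w : Equiv.Perm (Fin n)) : Prop :=
  ¬ ∃ i1 i2 i3 i4 : Fin n, i1 < i2 ∧ i2 < i3 ∧ i3 < i4 ∧
    w i3 < w i4 ∧ w i4 < w i1 ∧ w i1 < w i2

def Avoids4231 (w : Equiv.Perm (Fin n)) : Prop :=
  ¬ ∃ i1 i2 i3 i4 : Fin n, i1 < i2 ∧ i2 < i3 ∧ i3 < i4 ∧
    w i4 < w i2 ∧ w i2 < w i3 ∧ w i3 < w i1

def Avoids312 (w : Equiv.Perm (Fin n)) : Prop :=
  ¬ ∃ i1 i2 i3 : Fin n, i1 < i2 ∧ i2 < i3 ∧ w i2 < w i3 ∧ w i3 < w i1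

/-- The source-`i`-to-sink-`i` and source-`j`-to-sink-`j` paths share a vertex. -/
def PathsIntersect (D : IntervalData n t) (i j : Fin n) : Prop :=
  ∃ p q, IsPathFromTo D p i i ∧ IsPathFromTo D q j j ∧ ∃ x, x ∈ p ∧ x ∈ q

/-- The strict order of the poset `P(F)`. -/
def PRel (D : IntervalData n t) (i j : Fin n) : Prop :=
  i < j ∧ ¬ PathsIntersect D i j

/-- Descending star network: `c 0 > c 1 > ⋯`. -/
def Descending (D : IntervalData n t) : Prop :=
  ∀ k l : Fin t, k < l → D.c l < D.c k

/-- Incomparability for a strict order. -/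
def Incomp {α : Type*} (r : α → α → Prop) (x y : α) : Prop :=
  x ≠ y ∧ ¬ r x y ∧ ¬ r y x

/-- A strict order is a unit interval order if it is (3+1)-free and (2+2)-free. -/
def UnitIntervalOrder {α : Type*} (r : α → α → Prop) : Prop :=
  (¬ ∃ a b c x, r a b ∧ r b c ∧ Incomp r x a ∧ Incomp r x b ∧ Incomp r x c) ∧
  (¬ ∃ a b x y, r a b ∧ r x y ∧ Incomp r a x ∧ Incomp r a y ∧
      Incomp r b x ∧ Incomp r b y)

/-- `lam` is a partition of `n`. -/
def IsPartition (lam : List ℕ) (n : ℕ) : Prop :=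
  lam.Pairwise (· ≥ ·) ∧ (∀ x ∈ lam, 0 < x) ∧ lam.sum = n

/-- An `F`-tableau of shape `lam` (French notation): a covering path family
together with an arrangement of the `n` source indices into rows of
lengths `lam`. -/
structure Tableau (D : IntervalData n t) (lam : List ℕ) : Type where
  fam : Fin n → List (V n t)
  typ : Equiv.Perm (Fin n)
  isFam : IsFamilyOfType D fam typ
  covers : Covers D fam
  rows : List (List (Fin n))
  shape : rows.map List.length = lam
  nodup : rows.flatten.Nodup
  complete : ∀ i : Fin n, i ∈ rows.flatten

namespace Tableau

variable {D : IntervalData n t} {lam : List ℕ}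

/-- The paths indexed by `a` and `b` share a vertex. -/
def Intersect (U : Tableau D lam) (a b : Fin n) : Prop :=
  ∃ x, x ∈ U.fam a ∧ x ∈ U.fam b

def RowClosed (U : Tableau D lam) : Prop :=
  ∀ r ∈ U.rows, (r.map ⇑U.typ).Perm r

def LeftRowStrict (U : Tableau D lam) : Prop :=
  ∀ r ∈ U.rows, r.Chain' (· < ·)

def RowSemistrict (U : Tableau D lam) : Prop :=
  ∀ r ∈ U.rows, r.Chain' fun a b => ¬ (b < a ∧ ¬ U.Intersect a b)

def CycRowSemistrict (U : Tableau D lam) : Prop :=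
  U.RowSemistrict ∧ ∀ r ∈ U.rows, ∀ a b : Fin n,
    r.getLast? = some a → r.head? = some b → ¬ (b < a ∧ ¬ U.Intersect a b)

def RowStrict (U : Tableau D lam) : Prop :=
  ∀ r ∈ U.rows, r.Chain' fun a b => a < b ∧ ¬ U.Intersect a b

def RightAnchored (U : Tableau D lam) : Prop :=
  ∀ r ∈ U.rows, ∀ a : Fin n, r.getLast? = some a → ∀ b ∈ r, a ≤ b

def LeftAnchored (U : Tableau D lam) : Prop :=
  ∀ r ∈ U.rows, ∀ a : Fin n, r.head? = some a → ∀ b ∈ r, a ≤ b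

def Cylindrical (U : Tableau D lam) : Prop :=
  ∀ r ∈ U.rows, r.map ⇑U.typ = r.rotate 1

def TypeE (U : Tableau D lam) : Prop := U.typ = 1

/-- `inv (U_1 ∘ ⋯ ∘ U_r)`: inversions of the concatenation of the rows. -/
def invConcat (U : Tableau D lam) : ℕ :=
  Set.ncard {p : Fin U.rows.flatten.length × Fin U.rows.flatten.length |
    p.1 < p.2 ∧ U.Intersect (U.rows.flatten.get p.1) (U.rows.flatten.get p.2) ∧
      U.rows.flatten.get p.2 < U.rows.flatten.get p.1}

/-- `inv (U^R)` for a one-rowed tableau `U`. -/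
def invR (U : Tableau D lam) : ℕ :=
  Set.ncard {p : Fin U.rows.flatten.length × Fin U.rows.flatten.length |
    p.1 < p.2 ∧ U.Intersect (U.rows.flatten.get p.1) (U.rows.flatten.get p.2) ∧
      U.rows.flatten.get p.1 < U.rows.flatten.get p.2}

/-- `rinv` of a single row `r`. -/
def rinvRow (U : Tableau D lam) (r : List (Fin n)) : ℕ :=
  Set.ncard {p : Fin r.length × Fin r.length |
    p.1 < p.2 ∧ U.Intersect (r.get p.1) (r.get p.2) ∧
      U.typ (r.get p.2) < U.typ (r.get p.1)}

/-- `rinv (U_1) + ⋯ + rinv (U_r)`. -/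
def rinvRowsSum (U : Tableau D lam) : ℕ := (U.rows.map U.rinvRow).sum

/-- `inv (U^tr)`: inversions between entries of distinct rows. -/
def invTr (U : Tableau D lam) : ℕ :=
  Set.ncard {p : Fin n × Fin n |
    (∃ j1 j2 : ℕ, j1 < j2 ∧ p.1 ∈ U.rows.getD j1 [] ∧ p.2 ∈ U.rows.getD j2 []) ∧
      U.Intersect p.1 p.2 ∧ p.2 < p.1}

/-- `rinv (U^tr)`: right inversions between entries of distinct rows. -/
def rinvTr (U : Tableau D lam) : ℕ :=
  Set.ncard {p : Fin n × Fin n |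
    (∃ j1 j2 : ℕ, j1 < j2 ∧ p.1 ∈ U.rows.getD j1 [] ∧ p.2 ∈ U.rows.getD j2 []) ∧
      U.Intersect p.1 p.2 ∧ U.typ p.2 < U.typ p.1}

end Tableau

/-- Row `j` of `U` has entry set `I j`. -/
def RowContents {D : IntervalData n t} {lam : List ℕ} (U : Tableau D lam)
    (I : Fin lam.length → Finset (Fin n)) : Prop :=
  ∀ j : Fin lam.length, (U.rows.getD (j : ℕ) []).toFinset = I j

/-- `[a]_q = 1 + q + ⋯ + q^(a-1)`. -/
noncomputable def qNat (a : ℕ) : Polynomial ℤ := ∑ i ∈ Finset.range a, Polynomial.X ^ i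

/-- `[a]_q! = [a]_q [a-1]_q ⋯ [1]_q`. -/
noncomputable def qFact (a : ℕ) : Polynomial ℤ := ∏ i ∈ Finset.range a, qNat (i + 1)

/-- The network is connected as an (undirected) graph. -/
def Connected (D : IntervalData n t) : Prop :=
  ∀ x y : V n t, Relation.ReflTransGen (fun a b => Edge D a b ∨ Edge D b a) x y

noncomputable def Onum (D : IntervalData n t) : Polynomial ℤ :=
  ∏ k : Fin t, qFact ((D.d k : ℕ) - (D.c k : ℕ))

noncomputable def Oden (D : IntervalData n t) : Polynomial ℤ :=
  ∏ p : Fin t × Fin t,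
    if Cov D p.1 p.2 then
      if D.c p.1 < D.c p.2 then qFact ((D.d p.1 : ℕ) - (D.c p.2 : ℕ))
      else qFact ((D.d p.2 : ℕ) - (D.c p.1 : ℕ))
    else 1

/-- The rational function `O(F)`, an element of the fraction field of `ℤ[q]`. -/
noncomputable def OF (D : IntervalData n t) : FractionRing (Polynomial ℤ) :=
  if Connected D then
    algebraMap (Polynomial ℤ) (FractionRing (Polynomial ℤ)) (Onum D) /
      algebraMap (Polynomial ℤ) (FractionRing (Polynomial ℤ)) (Oden D)
  else 0

/-- Cycle type of a permutation, as a partition of `n` (including fixed points). -/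
noncomputable def fullCycleType (v : Equiv.Perm (Fin n)) : Multiset ℕ :=
  v.cycleType + Multiset.replicate (n - v.support.card) 1

/-- `z_λ = 1^{α_1} 2^{α_2} ⋯ α_1! α_2! ⋯`. -/
noncomputable def zPart (lam : List ℕ) : ℕ :=
  lam.prod * ∏ i ∈ lam.toFinset, (lam.count i).factorial

/-- `rinv (U(u, π))` where the one-rowed tableau `U(u,π)` lists the paths
`fam (u 0), fam (u 1), …` whose sinks are `v 0, v 1, …`. -/
def rinvU (D : IntervalData n t) (fam : Fin n → List (V n t))
    (u v : Equiv.Perm (Fin n)) : ℕ :=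
  Set.ncard {p : Fin n × Fin n | p.1 < p.2 ∧
    (∃ x, x ∈ fam (u p.1) ∧ x ∈ fam (u p.2)) ∧ v p.2 < v p.1}

/-- Edges of the restricted network `F|_S`, the union of the
source-`i`-to-sink-`i` paths for `i ∈ S`. -/
def REdge (D : IntervalData n t) (S : Finset (Fin n)) (x y : V n t) : Prop :=
  Edge D x y ∧ ∃ i ∈ S, ∃ p, IsPathFromTo D p i i ∧ [x, y] <:+: p

/-- A cylindrical one-rowed tableau of the restricted network `F|_S`. -/
structure SubRowTab (D : IntervalData n t) (S : Finset (Fin n)) : Type where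
  row : List (Fin n)
  nodup : row.Nodup
  content : row.toFinset = S
  fam : Fin n → List (V n t)
  isPath : ∀ m : Fin row.length,
    PathIn (REdge D S) (fam (row.get m)) (V.src (row.get m))
      (V.snk (row.get ⟨((m : ℕ) + 1) % row.length, Nat.mod_lt _ m.pos⟩))
  covers : ∀ x y, REdge D S x y → ∃ a ∈ row, [x, y] <:+: fam a

/-- Inversions of a one-rowed subnetwork tableau. -/
def SubRowTab.Inv {D : IntervalData n t} {S : Finset (Fin n)}
    (W : SubRowTab D S) : ℕ :=
  Set.ncard {p : Fin W.row.length × Fin W.row.length | p.1 < p.2 ∧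
    (∃ x, x ∈ W.fam (W.row.get p.1) ∧ x ∈ W.fam (W.row.get p.2)) ∧
    W.row.get p.2 < W.row.get p.1}

def SubRowTab.LeftAnchored {D : IntervalData n t} {S : Finset (Fin n)}
    (W : SubRowTab D S) : Prop :=
  ∀ a : Fin n, W.row.head? = some a → ∀ b ∈ W.row, a ≤ b

/-- The concatenation `V(F,I)_1 ∘ ⋯ ∘ V(F,I)_r` of the rows of the tableau
`V(F,I)`, as a list of source indices: each block `I j` in increasing order. -/
def Vlist {r : ℕ} (I : Fin r → Finset (Fin n)) : List (Fin n) :=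
  (List.finRange r).flatMap fun j => (I j).sort (· ≤ ·)

/-- Inversions of a list of indices, filled with the type-`e` path family. -/
def invListE (D : IntervalData n t) (l : List (Fin n)) : ℕ :=
  Set.ncard {p : Fin l.length × Fin l.length | p.1 < p.2 ∧
    PathsIntersect D (l.get p.1) (l.get p.2) ∧ l.get p.2 < l.get p.1}

variable {D : IntervalData n t}

lemma d_lt_d_of_c_le {k l : Fin t} (hne : k ≠ l) (h : D.c k ≤ D.c l) : D.d k < D.d l :=
  lt_of_not_ge fun hd => D.nonnest k l hne ⟨h, hd⟩

lemma c_ne_c {k l : Fin t} (hne : k ≠ l) : D.c k ≠ D.c l := fun h =>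
  (d_lt_d_of_c_le hne h.le).not_gt (d_lt_d_of_c_le hne.symm h.ge)

lemma IntervalData.mem_of_le_of_le {k : Fin t} {x y z : Fin n} (hx : D.mem k x)
    (hy : D.mem k y) (hxz : x ≤ z) (hzy : z ≤ y) : D.mem k z :=
  ⟨hx.1.trans hxz, hzy.trans hy.2⟩

lemma intersects_of_mem {k l : Fin t} {x : Fin n} (hk : D.mem k x) (hl : D.mem l x) :
    D.c k ≤ D.d l ∧ D.c l ≤ D.d k :=
  ⟨hk.1.trans hl.2, hl.1.trans hk.2⟩

section PathIn

variable {E : V n t → V n t → Prop} {p : List (V n t)} {a b x y : V n t}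

lemma PathIn.exists_eq_cons (h : PathIn E p x y) : ∃ r, p = x :: r := by
  obtain ⟨hne, -, hx, -⟩ := h
  obtain ⟨c, r, rfl⟩ := List.exists_cons_of_ne_nil hne
  cases hx
  exact ⟨r, rfl⟩

lemma pathIn_singleton_iff : PathIn E [a] x y ↔ a = x ∧ a = y :=
  ⟨fun ⟨_, _, hx, hy⟩ => ⟨Option.some.inj hx, Option.some.inj hy⟩,
    fun ⟨hx, hy⟩ => ⟨List.cons_ne_nil _ _, List.isChain_singleton _, hx ▸ rfl, hy ▸ rfl⟩⟩

lemma pathIn_cons_cons_iff {r : List (V n t)} :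
    PathIn E (a :: b :: r) x y ↔ a = x ∧ E a b ∧ PathIn E (b :: r) b y := by
  refine ⟨fun ⟨_, hc, hx, hy⟩ => ?_, fun ⟨hx, hab, _, hc, _, hy⟩ => ?_⟩
  · obtain ⟨hab, hc⟩ := List.isChain_cons_cons.mp hc
    exact ⟨Option.some.inj hx, hab, List.cons_ne_nil _ _, hc, rfl, hy⟩
  · exact ⟨List.cons_ne_nil _ _, List.isChain_cons_cons.mpr ⟨hab, hc⟩, hx ▸ rfl, hy⟩

end PathIn

lemma not_edge_snk {s : Fin n} {y : V n t} : ¬ Edge D (V.snk s) y := nofun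

lemma edge_ctr_ctr_iff {k l : Fin t} :
    Edge D (V.ctr k) (V.ctr l) ↔
      k < l ∧ ∃ x, D.mem k x ∧ D.mem l x ∧ ∀ m, k < m → m < l → ¬ D.mem m x :=
  ⟨fun h => by cases h with | ctrCtr x _ _ hkl hk hl hgap => exact ⟨hkl, x, hk, hl, hgap⟩,
    fun ⟨hkl, x, hk, hl, hgap⟩ => .ctrCtr x k l hkl hk hl hgap⟩

lemma eq_of_pathIn_snk {p : List (V n t)} {i s : Fin n}
    (h : PathIn (Edge D) p (V.snk i) (V.snk s)) : i = s := by
  obtain ⟨r, rfl⟩ := h.exists_eq_cons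
  cases r with
  | nil => simpa using (pathIn_singleton_iff.mp h).2
  | cons b r => exact absurd (pathIn_cons_cons_iff.mp h).2.1 not_edge_snk

section Uniqueness

def IsLastStar (D : IntervalData n t) (s : Fin n) (K : Fin t) : Prop :=
  D.mem K s ∧ ∀ m, K < m → ¬ D.mem m s

lemma IsLastStar.eq {s : Fin n} {K K' : Fin t} (h : IsLastStar D s K)
    (h' : IsLastStar D s K') : K = K' :=
  le_antisymm (not_lt.mp fun hlt => h'.2 _ hlt h.1) (not_lt.mp fun hlt => h.2 _ hlt h'.1)

lemma exists_isLastStar_of_pathIn :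
    ∀ (p : List (V n t)) {l : Fin t} {s : Fin n},
      PathIn (Edge D) p (V.ctr l) (V.snk s) → ∃ K, l ≤ K ∧ IsLastStar D s K
  | [], _, _, h => absurd rfl h.1
  | [_], _, _, h => by
    obtain ⟨rfl, h⟩ := pathIn_singleton_iff.mp h
    cases h
  | a :: b :: r, l, s, h => by
    obtain ⟨rfl, hab, hb⟩ := pathIn_cons_cons_iff.mp h
    cases hab with
    | ctrSnk i _ hmem hmax => exact ⟨l, le_rfl, eq_of_pathIn_snk hb ▸ ⟨hmem, hmax⟩⟩
    | ctrCtr _ _ l' hll' =>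
      obtain ⟨K, hl'K, hK⟩ := exists_isLastStar_of_pathIn _ hb
      exact ⟨K, (hll'.trans_le hl'K).le, hK⟩

/-- By the triple-overlap condition the left endpoints `c` of the stars visited by a path are
strictly monotone. -/
lemma c_lt_c_iff_of_pathIn :
    ∀ (r : List (V n t)) {k l K : Fin t} {s : Fin n},
      PathIn (Edge D) (V.ctr k :: V.ctr l :: r) (V.ctr k) (V.snk s) → IsLastStar D s K →
      (D.c k < D.c l ↔ D.c k < D.c K)
  | [], _, _, _, _, h, _ => by simp [PathIn] at h
  | b :: r, k, l, K, s, h, hK => by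
    obtain ⟨-, hkl, h₂⟩ := pathIn_cons_cons_iff.mp h
    obtain ⟨-, hlb, h₃⟩ := pathIn_cons_cons_iff.mp h₂
    cases hlb with
    | ctrSnk i _ hmem hmax =>
      rw [(IsLastStar.eq ⟨hmem, hmax⟩ (eq_of_pathIn_snk h₃ ▸ hK))]
    | ctrCtr y _ m hlm hyl hym =>
      have ih := c_lt_c_iff_of_pathIn r h₂ hK
      obtain ⟨hkl, x, hxk, hxl, -⟩ := edge_ctr_ctr_iff.mp hkl
      rcases D.tripleOverlap k l m hkl hlm (intersects_of_mem hxk hxl)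
          (intersects_of_mem hyl hym) with ⟨hkl', hlm'⟩ | ⟨hml, hlk⟩
      · exact iff_of_true hkl' (hkl'.trans (ih.mp hlm'))
      · exact iff_of_false hlk.not_gt fun hkK => (ih.not.mp hml.not_gt) (hlk.trans hkK)

lemma false_of_edges_ctr_lt {k l l' : Fin t} {p q : List (V n t)} {s : Fin n}
    (ekl : Edge D (V.ctr k) (V.ctr l)) (ekl' : Edge D (V.ctr k) (V.ctr l'))
    (hp : PathIn (Edge D) (V.ctr l :: p) (V.ctr l) (V.snk s))
    (hq : PathIn (Edge D) (V.ctr l' :: q) (V.ctr l') (V.snk s)) (hll' : l < l') : False := by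
  obtain ⟨K, -, hK⟩ := exists_isLastStar_of_pathIn _ hp
  have dir := c_lt_c_iff_of_pathIn _ (pathIn_cons_cons_iff.mpr ⟨rfl, ekl, hp⟩) hK
  have dir' := c_lt_c_iff_of_pathIn _ (pathIn_cons_cons_iff.mpr ⟨rfl, ekl', hq⟩) hK
  obtain ⟨hkl, x, hxk, hxl, -⟩ := edge_ctr_ctr_iff.mp ekl
  obtain ⟨hkl', x', hx'k, hx'l', hgap⟩ := edge_ctr_ctr_iff.mp ekl'
  have hx'l : ¬ D.mem l x' := hgap l hkl hll'
  -- Both paths leave `k` in the direction of the last star of `s`. In either direction the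
  -- wire `x'`, which joins `k` to `l'` but misses `l`, makes `l` and `l'` overlap, and then the
  -- triple-overlap condition for `k < l < l'` fails.
  by_cases hK : D.c k < D.c K
  · have hcl : D.c k < D.c l := dir.mpr hK
    have hcl' : D.c k < D.c l' := dir'.mpr hK
    have hx'c : x' < D.c l := by
      by_contra! hle
      exact hx'l ⟨hle, (hx'k.2.trans_lt (d_lt_d_of_c_le hkl.ne hcl.le)).le⟩
    have hover : D.c l ≤ D.d l' ∧ D.c l' ≤ D.d l :=
      ⟨(hxl.1.trans hxk.2).trans (d_lt_d_of_c_le hkl'.ne hcl'.le).le,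
        (hx'l'.1.trans hx'c.le).trans (D.cd_le l)⟩
    rcases D.tripleOverlap k l l' hkl hll' (intersects_of_mem hxk hxl) hover with h | h
    · exact (hx'l'.1.trans_lt hx'c).not_gt h.2
    · exact h.2.not_gt hcl
  · have hcl : D.c l < D.c k := lt_of_le_of_ne (not_lt.mp (hK ∘ dir.mp)) (c_ne_c hkl.ne')
    have hcl' : D.c l' < D.c k := lt_of_le_of_ne (not_lt.mp (hK ∘ dir'.mp)) (c_ne_c hkl'.ne')
    have hx'd : D.d l < x' := by
      by_contra! hle
      exact hx'l ⟨(hcl.trans_le hx'k.1).le, hle⟩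
    have hover : D.c l ≤ D.d l' ∧ D.c l' ≤ D.d l :=
      ⟨(D.cd_le l).trans (hx'd.le.trans hx'l'.2), (hcl'.trans_le hxk.1).le.trans hxl.2⟩
    rcases D.tripleOverlap k l l' hkl hll' (intersects_of_mem hxk hxl) hover with h | h
    · exact h.1.not_gt hcl
    · exact (d_lt_d_of_c_le hll'.ne' h.1.le).not_gt (hx'd.trans_le hx'l'.2)

lemma eq_of_edge_of_edge {x y y' : V n t} {p q : List (V n t)} {s : Fin n}
    (hy : Edge D x y) (hy' : Edge D x y')
    (hp : PathIn (Edge D) (y :: p) y (V.snk s)) (hq : PathIn (Edge D) (y' :: q) y' (V.snk s)) :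
    y = y' := by
  cases hy with
  | srcCtr a k hk hmin =>
    cases hy' with
    | srcCtr _ k' hk' hmin' =>
      rw [le_antisymm (not_lt.mp fun h => hmin _ h hk') (not_lt.mp fun h => hmin' _ h hk)]
    | srcSnk _ hno => exact absurd hk (hno k)
  | srcSnk a hno =>
    cases hy' with
    | srcCtr _ k hk _ => exact absurd hk (hno k)
    | srcSnk => rfl
  | ctrSnk i k _ hmax =>
    cases hy' with
    | ctrSnk i' => rw [eq_of_pathIn_snk hp, eq_of_pathIn_snk hq]
    | ctrCtr _ _ l' hkl' =>
      obtain ⟨K, hl'K, hK⟩ := exists_isLastStar_of_pathIn _ hq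
      exact absurd hK.1 (eq_of_pathIn_snk hp ▸ hmax K (hkl'.trans_le hl'K))
  | ctrCtr x₀ k l hkl h₁ h₂ hgap =>
    cases hy' with
    | ctrSnk i' _ _ hmax =>
      obtain ⟨K, hlK, hK⟩ := exists_isLastStar_of_pathIn _ hp
      exact absurd hK.1 (eq_of_pathIn_snk hq ▸ hmax K (hkl.trans_le hlK))
    | ctrCtr x₀' _ l' hkl' h₁' h₂' hgap' =>
      have e : Edge D (V.ctr k) (V.ctr l) := .ctrCtr x₀ k l hkl h₁ h₂ hgap
      have e' : Edge D (V.ctr k) (V.ctr l') := .ctrCtr x₀' k l' hkl' h₁' h₂' hgap'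
      rcases lt_trichotomy l l' with h | rfl | h
      · exact (false_of_edges_ctr_lt e e' hp hq h).elim
      · rfl
      · exact (false_of_edges_ctr_lt e' e hq hp h).elim

lemma pathIn_unique :
    ∀ {p q : List (V n t)} {x : V n t} {s : Fin n},
      PathIn (Edge D) p x (V.snk s) → PathIn (Edge D) q x (V.snk s) → p = q
  | [], _, _, _, hp, _ => absurd rfl hp.1
  | _, [], _, _, _, hq => absurd rfl hq.1
  | [a], [b], _, _, hp, hq => by
    rw [(pathIn_singleton_iff.mp hp).1, (pathIn_singleton_iff.mp hq).1]
  | [a], b :: b' :: q, _, _, hp, hq => by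
    obtain ⟨rfl, rfl⟩ := pathIn_singleton_iff.mp hp
    obtain ⟨rfl, hbb', -⟩ := pathIn_cons_cons_iff.mp hq
    exact absurd hbb' not_edge_snk
  | a :: a' :: p, [b], _, _, hp, hq => by
    obtain ⟨rfl, rfl⟩ := pathIn_singleton_iff.mp hq
    obtain ⟨rfl, haa', -⟩ := pathIn_cons_cons_iff.mp hp
    exact absurd haa' not_edge_snk
  | a :: a' :: p, b :: b' :: q, _, _, hp, hq => by
    obtain ⟨rfl, haa', hp'⟩ := pathIn_cons_cons_iff.mp hp
    obtain ⟨rfl, hbb', hq'⟩ := pathIn_cons_cons_iff.mp hq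
    obtain rfl := eq_of_edge_of_edge haa' hbb' hp' hq'
    rw [pathIn_unique hp' hq']

end Uniqueness

section Crossing

/-- The wire `y`, followed from star `b` on, first meets the vertex `x`. -/
def WireEntry (D : IntervalData n t) (b : ℕ) (y : Fin n) : V n t → Prop
  | V.ctr k => b ≤ k ∧ D.mem k y ∧ ∀ m : Fin t, b ≤ m → m < k → ¬ D.mem m y
  | V.snk s => y = s ∧ ∀ m : Fin t, b ≤ m → ¬ D.mem m y
  | V.src _ => False

/-- `f τ` is the wire occupied by the path `p` just before star `τ`. -/
def IsTrajectory (D : IntervalData n t) (p : List (V n t)) (b : ℕ) (f : ℕ → Fin n) : Prop :=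
  ∀ τ : Fin t, b ≤ τ →
    (V.ctr τ ∈ p ∧ D.mem τ (f τ) ∧ D.mem τ (f (τ + 1))) ∨
      (f (τ + 1) = f τ ∧ ¬ D.mem τ (f τ))

lemma wireEntry_of_edge_src {a : Fin n} {x : V n t} (h : Edge D (V.src a) x) :
    WireEntry D 0 a x := by
  cases h with
  | srcCtr _ k hk hmin => exact ⟨Nat.zero_le _, hk, fun m _ hm => hmin m hm⟩
  | srcSnk _ hno => exact ⟨rfl, fun m _ => hno m⟩

lemma exists_wireEntry_of_edge_ctr {k : Fin t} {x : V n t} (h : Edge D (V.ctr k) x) :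
    ∃ y, D.mem k y ∧ WireEntry D (k + 1) y x := by
  cases h with
  | ctrSnk s _ hs hmax => exact ⟨s, hs, rfl, fun m hm => hmax m (by omega)⟩
  | ctrCtr y _ l hkl hyk hyl hgap =>
    exact ⟨y, hyk, hkl, hyl, fun m hm hml => hgap m (by omega) hml⟩

lemma exists_trajectory_of_wireEntry :
    ∀ (p : List (V n t)) {x : V n t} {s : Fin n} {b : ℕ} {y : Fin n},
      PathIn (Edge D) p x (V.snk s) → WireEntry D b y x →
      ∃ f : ℕ → Fin n, f b = y ∧ f t = s ∧ IsTrajectory D p b f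
  | [], _, _, _, _, h, _ => absurd rfl h.1
  | [_], x, s, b, y, h, hy => by
    obtain ⟨rfl, rfl⟩ := pathIn_singleton_iff.mp h
    obtain ⟨rfl, hmiss⟩ := hy
    exact ⟨fun _ => y, rfl, rfl, fun τ hτ => Or.inr ⟨rfl, hmiss τ hτ⟩⟩
  | x :: x' :: r, _, s, b, y, h, hy => by
    obtain ⟨rfl, hxx', h'⟩ := pathIn_cons_cons_iff.mp h
    cases x with
    | src => exact hy.elim
    | snk => exact absurd hxx' not_edge_snk
    | ctr k =>
      obtain ⟨hbk, hyk, hmiss⟩ := hy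
      obtain ⟨y', hy'k, hy'⟩ := exists_wireEntry_of_edge_ctr hxx'
      obtain ⟨g, hg, hgt, hgtraj⟩ := exists_trajectory_of_wireEntry _ h' hy'
      refine ⟨fun τ => if τ ≤ k then y else g τ, by simp [hbk], by simp [hgt], fun τ hτ => ?_⟩
      rcases lt_trichotomy (τ : ℕ) k with hτk | hτk | hτk
      · have hmτ : ¬ D.mem τ y := hmiss τ hτ hτk
        exact Or.inr ⟨by simp [hτk.le, Nat.succ_le_of_lt hτk], by simpa [hτk.le] using hmτ⟩
      · obtain rfl : τ = k := Fin.ext hτk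
        exact Or.inl ⟨List.mem_cons_self, by simpa using hyk, by simpa [hg] using hy'k⟩
      · have hτk' : ¬ (τ : ℕ) + 1 ≤ k := by omega
        simp only [hτk.not_ge, hτk', if_false]
        exact (hgtraj τ hτk).imp_left fun h => ⟨List.mem_cons_of_mem _ h.1, h.2⟩

lemma exists_trajectory {p : List (V n t)} {a s : Fin n}
    (hp : PathIn (Edge D) p (V.src a) (V.snk s)) :
    ∃ f : ℕ → Fin n, f 0 = a ∧ f t = s ∧ IsTrajectory D p 0 f := by
  obtain ⟨_ | ⟨x, r⟩, rfl⟩ := hp.exists_eq_cons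
  · cases (pathIn_singleton_iff.mp hp).2
  obtain ⟨-, hax, hp'⟩ := pathIn_cons_cons_iff.mp hp
  obtain ⟨f, hf0, hft, hf⟩ := exists_trajectory_of_wireEntry _ hp' (wireEntry_of_edge_src hax)
  exact ⟨f, hf0, hft, fun τ hτ => (hf τ hτ).imp_left fun h => ⟨List.mem_cons_of_mem _ h.1, h.2⟩⟩

/-- A wire can only overtake another one inside a star through which both paths pass. -/
lemma IsTrajectory.lt_of_disjoint {p q : List (V n t)} {f g : ℕ → Fin n}
    (hf : IsTrajectory D p 0 f) (hg : IsTrajectory D q 0 g) (hpq : ∀ x ∈ p, x ∉ q)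
    (h₀ : g 0 < f 0) : ∀ τ ≤ t, g τ < f τ
  | 0, _ => h₀
  | τ + 1, hτ => by
    have ih := IsTrajectory.lt_of_disjoint hf hg hpq h₀ τ (by omega)
    rcases hf ⟨τ, by omega⟩ (Nat.zero_le _) with ⟨hp, hf₁, hf₂⟩ | ⟨hf₁, hf₂⟩ <;>
      rcases hg ⟨τ, by omega⟩ (Nat.zero_le _) with ⟨hq, hg₁, hg₂⟩ | ⟨hg₁, hg₂⟩
    · exact (hpq _ hp hq).elim
    · by_contra! hle
      exact hg₂ (IntervalData.mem_of_le_of_le hf₂ hf₁ (hg₁ ▸ hle) ih.le)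
    · by_contra! hle
      exact hf₂ (IntervalData.mem_of_le_of_le hg₁ hg₂ ih.le (hf₁ ▸ hle))
    · simpa [hf₁, hg₁] using ih

lemma exists_common_of_crossing {p q : List (V n t)} {a b sa sb : Fin n}
    (hp : PathIn (Edge D) p (V.src a) (V.snk sa)) (hq : PathIn (Edge D) q (V.src b) (V.snk sb))
    (hab : b < a) (hs : sa < sb) : ∃ x, x ∈ p ∧ x ∈ q := by
  by_contra! hpq
  obtain ⟨f, hf0, hft, hf⟩ := exists_trajectory hp
  obtain ⟨g, hg0, hgt, hg⟩ := exists_trajectory hq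
  have := hf.lt_of_disjoint hg hpq (hg0 ▸ hf0 ▸ hab) t le_rfl
  exact hs.not_gt (hgt ▸ hft ▸ this)

end Crossing

section Exchange

lemma pair_infix_append_cons {α : Type*} {a b x : α} {L M : List α}
    (h : [a, b] <:+: L ++ x :: M) : [a, b] <:+: L ++ [x] ∨ [a, b] <:+: x :: M := by
  rcases List.infix_append_iff_ne_nil.mp h with h | h | ⟨l₁, l₂, h₁, h₂, hab, hs, hp⟩
  · exact Or.inl (List.infix_append_of_infix_left h)
  · exact Or.inr h
  · obtain ⟨a', l₁, rfl⟩ := List.exists_cons_of_ne_nil h₁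
    obtain ⟨b', l₂, rfl⟩ := List.exists_cons_of_ne_nil h₂
    obtain ⟨rfl, rfl, rfl, rfl⟩ : a = a' ∧ l₁ = [] ∧ b = b' ∧ l₂ = [] := by
      rcases l₁ with _ | ⟨c, l₁⟩ <;> simp_all
    obtain rfl : b = x := by simpa using hp
    obtain ⟨L', rfl⟩ := hs
    exact Or.inl ⟨L', [], by simp⟩

lemma PathIn.exchange {E : V n t → V n t → Prop} {p q : List (V n t)} {x x' y y' z : V n t}
    (hp : PathIn E p x y) (hq : PathIn E q x' y') (hzp : z ∈ p) (hzq : z ∈ q) :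
    ∃ p' q', PathIn E p' x y' ∧ PathIn E q' x' y ∧ z ∈ p' ∧ z ∈ q' ∧
      ∀ a b, [a, b] <:+: p ∨ [a, b] <:+: q → [a, b] <:+: p' ∨ [a, b] <:+: q' := by
  obtain ⟨p₁, p₂, rfl⟩ := List.append_of_mem hzp
  obtain ⟨q₁, q₂, rfl⟩ := List.append_of_mem hzq
  obtain ⟨-, hpc, hpx, hpy⟩ := hp
  obtain ⟨-, hqc, hqx, hqy⟩ := hq
  replace hpc := List.isChain_append.mp hpc
  replace hqc := List.isChain_append.mp hqc
  refine ⟨p₁ ++ z :: q₂, q₁ ++ z :: p₂, ⟨by simp, ?_, ?_, ?_⟩, ⟨by simp, ?_, ?_, ?_⟩,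
    by simp, by simp, fun a b hab => ?_⟩
  · exact List.isChain_append.mpr ⟨hpc.1, hqc.2.1, by simpa using hpc.2.2⟩
  · simpa using hpx
  · simpa [List.getLast?_append_cons] using hqy
  · exact List.isChain_append.mpr ⟨hqc.1, hpc.2.1, by simpa using hqc.2.2⟩
  · simpa using hqx
  · simpa [List.getLast?_append_cons] using hpy
  · rcases hab with hab | hab <;> rcases pair_infix_append_cons hab with h | h
    · exact Or.inl (h.trans (List.IsPrefix.isInfix ⟨q₂, by simp⟩))
    · exact Or.inr (h.trans List.infix_append_right)
    · exact Or.inr (h.trans (List.IsPrefix.isInfix ⟨p₂, by simp⟩))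
    · exact Or.inl (h.trans List.infix_append_right)

variable {fam : Fin n → List (V n t)} {u v : Equiv.Perm (Fin n)} {i j : Fin n}

lemma exists_covers_mul_swap (hfam : ∀ m, IsPathFromTo D (fam (u m)) (u m) (v m))
    (hcov : Covers D fam) (hij : i ≠ j) (hmeet : ∃ x, x ∈ fam (u i) ∧ x ∈ fam (u j)) :
    ∃ ρ : Fin n → List (V n t),
      (∀ m, IsPathFromTo D (ρ (u m)) (u m) ((v * Equiv.swap i j) m)) ∧ Covers D ρ := by
  obtain ⟨z, hzi, hzj⟩ := hmeet
  obtain ⟨p', q', hp', hq', -, -, hedges⟩ := (hfam i).exchange (hfam j) hzi hzj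
  have hu : u i ≠ u j := u.injective.ne hij
  refine ⟨Function.update (Function.update fam (u i) p') (u j) q', fun m => ?_, fun x y hxy => ?_⟩
  · rcases eq_or_ne m i with rfl | hmi
    · simpa [IsPathFromTo, Function.update_of_ne hu] using hp'
    rcases eq_or_ne m j with rfl | hmj
    · simpa [IsPathFromTo] using hq'
    simpa [Function.update_of_ne (u.injective.ne hmi), Function.update_of_ne (u.injective.ne hmj),
      Equiv.swap_apply_of_ne_of_ne hmi hmj] using hfam m
  · obtain ⟨m, hm⟩ := hcov x y hxy
    by_cases hm' : m = u i ∨ m = u j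
    · rcases hedges x y (by rcases hm' with rfl | rfl <;> simp [hm]) with h | h
      · exact ⟨u i, by simpa [Function.update_of_ne hu] using h⟩
      · exact ⟨u j, by simpa using h⟩
    · rw [not_or] at hm'
      exact ⟨m, by simpa [Function.update_of_ne hm'.1, Function.update_of_ne hm'.2] using hm⟩

lemma exists_common_of_mul_swap (hfam : ∀ m, IsPathFromTo D (fam (u m)) (u m) (v m))
    {ρ : Fin n → List (V n t)}
    (hρ : ∀ m, IsPathFromTo D (ρ (u m)) (u m) ((v * Equiv.swap i j) m))
    (hu : u j < u i) (hv : v j < v i) : ∃ x, x ∈ fam (u i) ∧ x ∈ fam (u j) := by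
  have hρi : IsPathFromTo D (ρ (u i)) (u i) (v j) := by simpa using hρ i
  have hρj : IsPathFromTo D (ρ (u j)) (u j) (v i) := by simpa using hρ j
  obtain ⟨z, hzi, hzj⟩ := exists_common_of_crossing hρi hρj hu hv
  obtain ⟨p', q', hp', hq', hzp', hzq', -⟩ := PathIn.exchange hρi hρj hzi hzj
  exact ⟨z, pathIn_unique hp' (hfam i) ▸ hzp', pathIn_unique hq' (hfam j) ▸ hzq'⟩

end Exchange

section Counting

def rinvSet (fam : Fin n → List (V n t)) (u v : Equiv.Perm (Fin n)) : Set (Fin n × Fin n) :=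
  {p | p.1 < p.2 ∧ (∃ x, x ∈ fam (u p.1) ∧ x ∈ fam (u p.2)) ∧ v p.2 < v p.1}

lemma rinvU_eq_ncard_rinvSet (D : IntervalData n t) (fam : Fin n → List (V n t))
    (u v : Equiv.Perm (Fin n)) : rinvU D fam u v = (rinvSet fam u v).ncard :=
  rfl

variable {i j : Fin n}

lemma swap_lt_swap_of_lt (hij : (i : ℕ) + 1 = j) {a b : Fin n} (hab : a < b)
    (hne : (a, b) ≠ (i, j)) : Equiv.swap i j a < Equiv.swap i j b := by
  simp only [Fin.lt_def, Ne, Prod.mk.injEq, Fin.ext_iff] at hab hne ⊢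
  simp only [Equiv.swap_apply_def, Fin.ext_iff]
  split_ifs <;> omega

variable (fam : Fin n → List (V n t)) (u v : Equiv.Perm (Fin n))

lemma mapsTo_rinvSet_mul_swap (hij : (i : ℕ) + 1 = j) :
    Set.MapsTo (Prod.map (Equiv.swap i j) (Equiv.swap i j)) (rinvSet fam u v \ {(i, j)})
      (rinvSet fam (u * Equiv.swap i j) (v * Equiv.swap i j) \ {(i, j)}) := by
  rintro ⟨a, b⟩ ⟨⟨hab, hmeet, hv⟩, hne⟩
  refine ⟨⟨swap_lt_swap_of_lt hij hab hne, by simpa using hmeet, by simpa using hv⟩, ?_⟩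
  simp only [Set.mem_singleton_iff, Prod.map, Prod.mk.injEq, Equiv.swap_apply_eq_iff,
    Equiv.swap_apply_left, Equiv.swap_apply_right]
  rintro ⟨rfl, rfl⟩
  simp only [Fin.lt_def] at hab
  omega

lemma rinvU_mul_swap (D : IntervalData n t) (hij : (i : ℕ) + 1 = j) :
    rinvU D fam (u * Equiv.swap i j) (v * Equiv.swap i j) +
        (if (∃ x, x ∈ fam (u i) ∧ x ∈ fam (u j)) ∧ v j < v i then 1 else 0) =
      rinvU D fam u v + (if (∃ x, x ∈ fam (u i) ∧ x ∈ fam (u j)) ∧ v i < v j then 1 else 0) := by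
  have hlt : i < j := Fin.lt_def.mpr (by omega)
  have card_eq (S : Set (Fin n × Fin n)) :
      S.ncard = (S \ {(i, j)}).ncard + if (i, j) ∈ S then 1 else 0 := by
    split_ifs with h
    · exact (Set.ncard_sdiff_singleton_add_one h).symm
    · rw [Set.sdiff_singleton_eq_self h, add_zero]
  have hinj : Function.Injective (Prod.map (Equiv.swap i j) (Equiv.swap i j)) :=
    (Equiv.swap i j).injective.prodMap (Equiv.swap i j).injective
  have hmaps_back :=
    mapsTo_rinvSet_mul_swap fam (u * Equiv.swap i j) (v * Equiv.swap i j) hij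
  simp only [Equiv.mul_swap_mul_self] at hmaps_back
  have hdiff := le_antisymm
    (Set.ncard_le_ncard_of_injOn _ hmaps_back hinj.injOn (Set.toFinite _))
    (Set.ncard_le_ncard_of_injOn _ (mapsTo_rinvSet_mul_swap fam u v hij) hinj.injOn
      (Set.toFinite _))
  have mem : (i, j) ∈ rinvSet fam u v ↔ (∃ x, x ∈ fam (u i) ∧ x ∈ fam (u j)) ∧ v j < v i := by
    simp [rinvSet, hlt]
  have mem' : (i, j) ∈ rinvSet fam (u * Equiv.swap i j) (v * Equiv.swap i j) ↔
      (∃ x, x ∈ fam (u i) ∧ x ∈ fam (u j)) ∧ v i < v j := by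
    simp [rinvSet, hlt, exists_congr fun x => and_comm (a := x ∈ fam (u j))]
  rw [rinvU_eq_ncard_rinvSet, rinvU_eq_ncard_rinvSet, card_eq (rinvSet fam u v),
    card_eq (rinvSet fam _ _), hdiff]
  simp only [mem, mem']
  exact add_right_comm _ _ _

end Counting

/-- Here `j` is the position following `i`, and `u * Equiv.swap i j`, `v * Equiv.swap i j`
interchange the entries of `u`, `v` in positions `i`, `i+1`. -/
theorem statement11 (n t : ℕ) (D : IntervalData n t)
    (u v : Equiv.Perm (Fin n)) (fam : Fin n → List (V n t))
    (hfam : ∀ m, IsPathFromTo D (fam (u m)) (u m) (v m))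
    (hcov : Covers D fam)
    (i j : Fin n) (hij : (i : ℕ) + 1 = (j : ℕ)) (hu : u j < u i) :
    (v i < v j →
      rinvU D fam u v + 1 =
        rinvU D fam (u * Equiv.swap i j) (v * Equiv.swap i j)) ∧
    (v j < v i →
      ¬ (∃ ρ : Fin n → List (V n t),
          (∀ m, IsPathFromTo D (ρ (u m)) (u m) ((v * Equiv.swap i j) m)) ∧
          Covers D ρ) →
      rinvU D fam u v =
        rinvU D fam (u * Equiv.swap i j) (v * Equiv.swap i j)) ∧
    (v j < v i →
      (∃ ρ : Fin n → List (V n t),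
          (∀ m, IsPathFromTo D (ρ (u m)) (u m) ((v * Equiv.swap i j) m)) ∧
          Covers D ρ) →
      rinvU D fam u v =
        rinvU D fam (u * Equiv.swap i j) (v * Equiv.swap i j) + 1) := by
  have hcount := rinvU_mul_swap fam u v D hij
  refine ⟨fun hv => ?_, fun hv hno => ?_, fun hv ⟨ρ, hρ, _⟩ => ?_⟩
  · have hmeet := exists_common_of_crossing (hfam i) (hfam j) hu hv
    simp only [hmeet, hv, hv.not_gt, and_true, and_false, if_true, if_false] at hcount
    omega
  · have hmeet : ¬ ∃ x, x ∈ fam (u i) ∧ x ∈ fam (u j) := fun h =>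
      hno (exists_covers_mul_swap hfam hcov (Fin.ne_of_val_ne (by omega)) h)
    simp only [hmeet, false_and, if_false] at hcount
    omega
  · have hmeet := exists_common_of_mul_swap hfam hρ hu hv
    simp only [hmeet, hv, hv.not_gt, and_true, and_false, if_true, if_false] at hcount
    omega

end

end ZigZag
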